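/- arXiv:0912.0179 — 3 statements merged into one kernel-verified Lean document; each statement's English description precedes it below -/
import Mathlib

section
/- Let p, p', q, q' be real numbers with p ≤ p' ≤ q ≤ q' (so the intervals [p, q] and [p', q'] cross). Then the nested matching is at most as expensive as the crossing matching: c(p, q') + c(p', q) ≤ c(p, q) + c(p', q'), i.e. g(q' − p) + g(q − p') ≤ g(q − p) + g(q' − p'). -/
/-!
Put `s = x - b ≤ t = x - a, t' = y - b ≤ u = y - a`. Then `t` and `t'` lie in `[s, u]` and
`t + t' = s + u`, so they are the convex combinations `λ s + (1 - λ) u` and `(1 - λ) s + λ u` of the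
endpoints; adding the two concavity inequalities gives `g s + g u ≤ g t + g t'`.
-/

theorem ConcaveOn.add_le_add_of_add_eq {𝕜 : Type*} [Field 𝕜] [LinearOrder 𝕜]
    [IsStrictOrderedRing 𝕜] {s : Set 𝕜} {f : 𝕜 → 𝕜} (hf : ConcaveOn 𝕜 s f) {a b c d : 𝕜}
    (ha : a ∈ s) (hd : d ∈ s) (hab : a ≤ b) (hbd : b ≤ d) (hac : a ≤ c) (hcd : c ≤ d)
    (hsum : b + c = a + d) : f a + f d ≤ f b + f c := by
  rcases hab.trans hbd |>.eq_or_lt with rfl | had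
  · obtain rfl : b = a := le_antisymm hbd hab
    obtain rfl : c = b := le_antisymm hcd hac
    rfl
  set l := (d - b) / (d - a)
  have hda : 0 < d - a := sub_pos.mpr had
  have hl₀ : 0 ≤ l := div_nonneg (sub_nonneg.mpr hbd) hda.le
  have hl₁ : 0 ≤ 1 - l := by
    rw [sub_nonneg, div_le_one hda]
    linarith
  have hb : l • a + (1 - l) • d = b := by
    simp only [l, smul_eq_mul]
    field_simp
    ring
  have hc : (1 - l) • a + l • d = c := by
    simp only [smul_eq_mul] at hb ⊢
    linear_combination -hb - hsum
  have hfb := hf.2 ha hd hl₀ hl₁ (add_sub_cancel l 1)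
  have hfc := hf.2 ha hd hl₁ hl₀ (sub_add_cancel 1 l)
  rw [hb] at hfb
  rw [hc] at hfc
  simp only [smul_eq_mul] at hfb hfc
  linarith

theorem stmt_4_general
    (g : ℝ → ℝ)
    (hg : ConcaveOn ℝ Set.univ g)
    (c : ℝ → ℝ → ℝ)
    (hc : ∀ x y, c x y = g |x - y|)
    (a b x y : ℝ) (h1 : a ≤ b) (h2 : b ≤ x) (h3 : x ≤ y)
    : c a y + c b x ≤ c a x + c b y := by
  have habs : ∀ {p q : ℝ}, p ≤ q → c p q = g (q - p) := fun hpq => by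
    rw [hc, abs_sub_comm, abs_of_nonneg (sub_nonneg.mpr hpq)]
  rw [habs (h1.trans (h2.trans h3)), habs h2, habs (h1.trans h2), habs (h2.trans h3), add_comm (g _)]
  exact hg.add_le_add_of_add_eq (Set.mem_univ _) (Set.mem_univ _) (by linarith) (by linarith)
    (by linarith) (by linarith) (by ring)

theorem stmt_4
    (g : ℝ → ℝ)
    (hg : ConcaveOn ℝ Set.univ g)
    (hgmono : MonotoneOn g (Set.Ici 0))
    (c : ℝ → ℝ → ℝ)
    (hc : ∀ x y, c x y = g |x - y|)
    (a b x y : ℝ) (h1 : a ≤ b) (h2 : b ≤ x) (h3 : x ≤ y)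
    : c a y + c b x ≤ c a x + c b y :=
  stmt_4_general g hg c hc a b x y h1 h2 h3
end

section
/- There exists an optimal permutation σ* (i.e., C(σ*) ≤ C(σ) for every permutation σ of {1, ..., N_0}) satisfying the non-crossing rule: for all indices i ≠ i' such that p_i ≤ q_{σ*(i)} and p_{i'} ≤ q_{σ*(i')}, either the closed intervals [p_i, q_{σ*(i)}] and [p_{i'}, q_{σ*(i')}] are disjoint, or one of them is contained in the other. -/
/-!
Choose an optimal permutation that, among optimal ones, also minimises `∑ pᵢ q_{σ(i)}`. If two
of its rightward arcs crossed, `pᵢ < p_{i'} ≤ q_{σ(i)} < q_{σ(i')}`, exchanging their targets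
would replace the lengths `q_{σ(i)} - pᵢ`, `q_{σ(i')} - p_{i'}` by the pair
`q_{σ(i)} - p_{i'}`, `q_{σ(i')} - pᵢ`, which has the same sum and is more spread out; by
concavity of `g` the cost does not increase, while `∑ pᵢ q_{σ(i)}` strictly decreases
(rearrangement inequality), a contradiction.
-/

open Finset Equiv

theorem ConcaveOn.map_add_map_le_of_add_eq {𝕜 β : Type*} [Field 𝕜] [LinearOrder 𝕜]
    [IsStrictOrderedRing 𝕜] [AddCommGroup β] [PartialOrder β] [IsOrderedAddMonoid β]
    [Module 𝕜 β] {s : Set 𝕜} {f : 𝕜 → β} (hf : ConcaveOn 𝕜 s f) {u v x y : 𝕜}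
    (hu : u ∈ s) (hv : v ∈ s) (hux : u ≤ x) (hxv : x ≤ v) (hsum : u + v = x + y) :
    f u + f v ≤ f x + f y := by
  rcases (hux.trans hxv).eq_or_lt with rfl | huv
  · obtain rfl : x = u := le_antisymm hxv hux
    obtain rfl : y = x := by linarith
    rfl
  -- `x` and `y` are the convex combinations of `u` and `v` with swapped weights `t`, `1 - t`.
  set t := (v - x) / (v - u)
  have hvu : v - u ≠ 0 := (sub_pos.2 huv).ne'
  have ht₀ : 0 ≤ t := div_nonneg (sub_nonneg.2 hxv) (sub_pos.2 huv).le
  have ht₁ : 0 ≤ 1 - t := by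
    rw [sub_nonneg, div_le_one (sub_pos.2 huv)]; linarith
  have hx : t • u + (1 - t) • v = x := by simp only [t, smul_eq_mul]; field_simp; ring
  have hy : (1 - t) • u + t • v = y := by
    simp only [smul_eq_mul] at hx ⊢; linear_combination hsum - hx
  have hfx := hf.2 hu hv ht₀ ht₁ (by ring)
  have hfy := hf.2 hu hv ht₁ ht₀ (by ring)
  rw [hx] at hfx
  rw [hy] at hfy
  calc f u + f v = (t • f u + (1 - t) • f v) + ((1 - t) • f u + t • f v) := by
        simp only [sub_smul, one_smul]; abel
    _ ≤ f x + f y := add_le_add hfx hfy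

theorem Equiv.Perm.sum_comp_mul_swap_sub {ι M : Type*} [Fintype ι] [DecidableEq ι]
    [AddCommGroup M] (F : ι → ι → M) (e : Perm ι) {x x' : ι} (hx : x ≠ x') :
    ∑ y, F y ((e * swap x x') y) - ∑ y, F y (e y) =
      F x (e x') + F x' (e x) - (F x (e x) + F x' (e x')) := by
  rw [← sum_sub_distrib, Finset.sum_eq_add x x' hx]
  · simp only [Perm.mul_apply, swap_apply_left, swap_apply_right]; abel
  · intro y _ hy
    simp [swap_apply_of_ne_of_ne hy.1 hy.2]
  all_goals simp

theorem Set.Icc_disjoint_or_subset_or_subset {α : Type*} [LinearOrder α] {a b a' b' : α}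
    (h : a < a' → a' ≤ b → b' ≤ b) (h' : a' < a → a ≤ b' → b ≤ b') :
    Disjoint (Icc a b) (Icc a' b') ∨ Icc a b ⊆ Icc a' b' ∨ Icc a' b' ⊆ Icc a b := by
  rcases lt_trichotomy a a' with ha | rfl | ha
  · by_cases hb : a' ≤ b
    · exact .inr (.inr (Icc_subset_Icc ha.le (h ha hb)))
    · exact .inl (disjoint_left.2 fun z hz hz' => hb (hz'.1.trans hz.2))
  · rcases le_total b b' with hb | hb
    · exact .inr (.inl (Icc_subset_Icc_right hb))
    · exact .inr (.inr (Icc_subset_Icc_right hb))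
  · by_cases hb : a ≤ b'
    · exact .inr (.inl (Icc_subset_Icc ha.le (h' ha hb)))
    · exact .inl (disjoint_left.2 fun z hz hz' => hb (hz.1.trans hz'.2))

theorem Set.BijOn.sum_comp_equiv {α M : Type*} [AddCommMonoid M] {s : Set α} [Fintype s]
    {τ : α → α} (hτ : BijOn τ s s) (F : α → α → M) :
    ∑ i ∈ s.toFinset, F i (τ i) = ∑ x : s, F x (hτ.equiv τ x) := by
  rw [← Finset.sum_set_coe]; rfl

section Transport

variable {ι : Type*} [Fintype ι] (g : ℝ → ℝ) (P Q : ι → ℝ)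

def transportCost (e : Perm ι) : ℝ := ∑ y, g |P y - Q (e y)|

variable {g P Q}

theorem transportCost_mul_swap_le [DecidableEq ι] (hg : ConcaveOn ℝ (Set.Ici 0) g) (e : Perm ι) {x x' : ι}
    (hP : P x < P x') (hcross : P x' ≤ Q (e x)) (hQ : Q (e x) ≤ Q (e x')) :
    transportCost g P Q (e * swap x x') ≤ transportCost g P Q e := by
  have hdiff := Perm.sum_comp_mul_swap_sub (fun y j => g |P y - Q j|) e (ne_of_apply_ne P hP.ne)
  have habs : ∀ {a b : ℝ}, a ≤ b → |a - b| = b - a := fun hab => by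
    rw [abs_sub_comm, abs_of_nonneg (sub_nonneg.2 hab)]
  rw [habs (by linarith), habs hcross, habs (by linarith), habs (by linarith)] at hdiff
  have key := hg.map_add_map_le_of_add_eq (u := Q (e x) - P x') (v := Q (e x') - P x)
    (x := Q (e x) - P x) (y := Q (e x') - P x') (Set.mem_Ici.2 (by linarith))
    (Set.mem_Ici.2 (by linarith)) (by linarith) (by linarith) (by ring)
  unfold transportCost
  linarith

theorem sum_mul_comp_mul_swap_lt [DecidableEq ι] (e : Perm ι) {x x' : ι} (hP : P x < P x')
    (hQ : Q (e x) < Q (e x')) :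
    ∑ y, P y * Q ((e * swap x x') y) < ∑ y, P y * Q (e y) := by
  have hdiff := Perm.sum_comp_mul_swap_sub (fun y j => P y * Q j) e (ne_of_apply_ne P hP.ne)
  nlinarith [mul_pos (sub_pos.2 hP) (sub_pos.2 hQ)]

theorem exists_optimal_perm_nested (hg : ConcaveOn ℝ (Set.Ici 0) g) :
    ∃ e : Perm ι, (∀ e', transportCost g P Q e ≤ transportCost g P Q e') ∧
      ∀ x x', P x < P x' → P x' ≤ Q (e x) → Q (e x') ≤ Q (e x) := by
  classical
  obtain ⟨e, he⟩ := Finite.exists_min fun e : Perm ι =>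
    toLex (transportCost g P Q e, ∑ y, P y * Q (e y))
  refine ⟨e, fun e' => (Prod.Lex.toLex_le_toLex'.1 (he e')).1, fun x x' hP hcross => ?_⟩
  by_contra! hQ
  have hmin := Prod.Lex.toLex_le_toLex'.1 (he (e * swap x x'))
  have hcost := transportCost_mul_swap_le hg e hP hcross hQ.le
  exact (sum_mul_comp_mul_swap_lt e hP hQ).not_ge (hmin.2 (le_antisymm hmin.1 hcost))

end Transport

theorem stmt_5_general
    (N₀ : ℕ)
    (p q : ℕ → ℝ)
    (g : ℝ → ℝ)
    (hg : ConcaveOn ℝ Set.univ g)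
    (c : ℝ → ℝ → ℝ)
    (hc : ∀ x y, c x y = g |x - y|)
    (C : (ℕ → ℕ) → ℝ)
    (hC : ∀ σ : ℕ → ℕ, C σ = ∑ i ∈ Finset.Icc 1 N₀, c (p i) (q (σ i)))
    : ∃ σ : ℕ → ℕ, Set.BijOn σ (Set.Icc 1 N₀) (Set.Icc 1 N₀) ∧
      (∀ τ : ℕ → ℕ, Set.BijOn τ (Set.Icc 1 N₀) (Set.Icc 1 N₀) → C σ ≤ C τ) ∧
      (∀ i ∈ Set.Icc 1 N₀, ∀ i' ∈ Set.Icc 1 N₀, i ≠ i' →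
        p i ≤ q (σ i) → p i' ≤ q (σ i') →
        Disjoint (Set.Icc (p i) (q (σ i))) (Set.Icc (p i') (q (σ i'))) ∨
        Set.Icc (p i) (q (σ i)) ⊆ Set.Icc (p i') (q (σ i')) ∨
        Set.Icc (p i') (q (σ i')) ⊆ Set.Icc (p i) (q (σ i))) := by
  set s := Set.Icc 1 N₀
  set P : s → ℝ := fun x => p x
  set Q : s → ℝ := fun x => q x
  obtain ⟨e, hopt, hnested⟩ :=
    exists_optimal_perm_nested (P := P) (Q := Q) (hg.subset (Set.subset_univ _) (convex_Ici 0))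
  have hCτ (τ : ℕ → ℕ) (hτ : Set.BijOn τ s s) : C τ = transportCost g P Q (hτ.equiv τ) := by
    rw [hC, ← Set.toFinset_Icc, hτ.sum_comp_equiv fun i j => c (p i) (q j)]
    simp only [hc, transportCost, P, Q]
  set σ : ℕ → ℕ := ⇑(Perm.ofSubtype e)
  have hσ : Set.BijOn σ s s := (Perm.ofSubtype e).bijOn (Perm.ofSubtype_apply_mem_iff_mem e)
  have hσe : hσ.equiv σ = e := Equiv.ext fun x => Subtype.ext (Perm.ofSubtype_apply_coe e x)
  have hσs (i : ℕ) (hi : i ∈ s) : σ i = e ⟨i, hi⟩ := Perm.ofSubtype_apply_of_mem e hi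
  refine ⟨σ, hσ, fun τ hτ => ?_, fun i hi i' hi' _ _ _ => ?_⟩
  · rw [hCτ σ hσ, hCτ τ hτ, hσe]
    exact hopt _
  · rw [hσs i hi, hσs i' hi']
    exact Set.Icc_disjoint_or_subset_or_subset (hnested ⟨i, hi⟩ ⟨i', hi'⟩)
      (hnested ⟨i', hi'⟩ ⟨i, hi⟩)

theorem stmt_5
    (N₀ : ℕ) (hN₀ : 1 ≤ N₀)
    (p q : ℕ → ℝ)
    (hdist : Set.InjOn p (Set.Icc 1 N₀) ∧ Set.InjOn q (Set.Icc 1 N₀) ∧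
      ∀ i ∈ Set.Icc 1 N₀, ∀ j ∈ Set.Icc 1 N₀, p i ≠ q j)
    (g : ℝ → ℝ)
    (hg : ConcaveOn ℝ Set.univ g)
    (hgmono : MonotoneOn g (Set.Ici 0))
    (c : ℝ → ℝ → ℝ)
    (hc : ∀ x y, c x y = g |x - y|)
    (C : (ℕ → ℕ) → ℝ)
    (hC : ∀ σ : ℕ → ℕ, C σ = ∑ i ∈ Finset.Icc 1 N₀, c (p i) (q (σ i)))
    : ∃ σ : ℕ → ℕ, Set.BijOn σ (Set.Icc 1 N₀) (Set.Icc 1 N₀) ∧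
      (∀ τ : ℕ → ℕ, Set.BijOn τ (Set.Icc 1 N₀) (Set.Icc 1 N₀) → C σ ≤ C τ) ∧
      (∀ i ∈ Set.Icc 1 N₀, ∀ i' ∈ Set.Icc 1 N₀, i ≠ i' →
        p i ≤ q (σ i) → p i' ≤ q (σ i') →
        Disjoint (Set.Icc (p i) (q (σ i))) (Set.Icc (p i') (q (σ i'))) ∨
        Set.Icc (p i) (q (σ i)) ⊆ Set.Icc (p i') (q (σ i')) ∨
        Set.Icc (p i') (q (σ i')) ⊆ Set.Icc (p i) (q (σ i))) :=
  stmt_5_general N₀ p q g hg c hc C hC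
end

section
/- Let σ be a permutation of {1, ..., N_0} satisfying the non-crossing property: for all indices i ≠ i', the closed interval with endpoints p_i and q_{σ(i)} and the closed interval with endpoints p_{i'} and q_{σ(i')} are either disjoint or one is contained in the other. Then between any pair of matched points there are as many supply points as demand points: for every i, the number of indices j with p_j strictly between p_i and q_{σ(i)} equals the number of indices j with q_j strictly between p_i and q_{σ(i)}. -/
/-!
Matched pairs `(p j, q (σ j))` other than the given one `(p i, q (σ i))` come in three kinds
relative to the open interval `I` between `p i` and `q (σ i)`: pairs whose interval is disjoint
from it or contains it have neither endpoint in `I`, and pairs nested inside it have both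
endpoints in `I` (endpoints are distinct from `p i` and `q (σ i)`). So `p j ∈ I ↔ q (σ j) ∈ I`
for every `j`, and `σ` is a bijection from the demand points in `I` onto the supply points in `I`.
-/

open Set

section Intervals

variable {α : Type*} [LinearOrder α] {a b c d : α}

lemma notMem_Ioo_min_max_of_uIcc_subset (h : uIcc a b ⊆ uIcc c d) :
    c ∉ Ioo (min a b) (max a b) ∧ d ∉ Ioo (min a b) (max a b) := by
  obtain ⟨hmin, hmax⟩ := uIcc_subset_uIcc_iff_le.1 h
  simp only [mem_Ioo, not_and_or, not_lt]
  rcases le_total c d with hcd | hdc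
  · rw [min_eq_left hcd] at hmin
    rw [max_eq_right hcd] at hmax
    exact ⟨Or.inl hmin, Or.inr hmax⟩
  · rw [min_eq_right hdc] at hmin
    rw [max_eq_left hdc] at hmax
    exact ⟨Or.inr hmax, Or.inl hmin⟩

lemma notMem_Ioo_min_max_of_disjoint (h : Disjoint (uIcc c d) (uIcc a b)) :
    c ∉ Ioo (min a b) (max a b) ∧ d ∉ Ioo (min a b) (max a b) :=
  ⟨fun hc ↦ disjoint_left.1 h left_mem_uIcc (Ioo_subset_Icc_self hc),
    fun hd ↦ disjoint_left.1 h right_mem_uIcc (Ioo_subset_Icc_self hd)⟩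

lemma mem_Ioo_min_max_of_mem_uIcc (hc : c ∈ uIcc a b) (ha : c ≠ a) (hb : c ≠ b) :
    c ∈ Ioo (min a b) (max a b) := by
  have hmin : c ≠ min a b := by rcases min_choice a b with h | h <;> rwa [h]
  have hmax : c ≠ max a b := by rcases max_choice a b with h | h <;> rwa [h]
  exact ⟨lt_of_le_of_ne hc.1 hmin.symm, lt_of_le_of_ne hc.2 hmax⟩

lemma mem_Ioo_min_max_iff_of_disjoint_or_nested (hca : c ≠ a) (hcb : c ≠ b) (hda : d ≠ a)
    (hdb : d ≠ b)
    (h : Disjoint (uIcc c d) (uIcc a b) ∨ uIcc c d ⊆ uIcc a b ∨ uIcc a b ⊆ uIcc c d) :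
    c ∈ Ioo (min a b) (max a b) ↔ d ∈ Ioo (min a b) (max a b) := by
  rcases h with hdisj | hin | hout
  · exact iff_of_false (notMem_Ioo_min_max_of_disjoint hdisj).1
      (notMem_Ioo_min_max_of_disjoint hdisj).2
  · exact iff_of_true (mem_Ioo_min_max_of_mem_uIcc (hin left_mem_uIcc) hca hcb)
      (mem_Ioo_min_max_of_mem_uIcc (hin right_mem_uIcc) hda hdb)
  · exact iff_of_false (notMem_Ioo_min_max_of_uIcc_subset hout).1
      (notMem_Ioo_min_max_of_uIcc_subset hout).2

end Intervals

lemma Finset.card_filter_eq_of_bijOn {ι : Type*} {s : Finset ι} {σ : ι → ι}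
    (hσ : BijOn σ s s) {P Q : ι → Prop} [DecidablePred P] [DecidablePred Q]
    (hPQ : ∀ j ∈ s, P j ↔ Q (σ j)) : (s.filter P).card = (s.filter Q).card := by
  refine BijOn.finsetCard_eq σ ⟨fun j hj ↦ ?_, hσ.injOn.mono fun j hj ↦ ?_, fun k hk ↦ ?_⟩
  · simp only [Finset.mem_coe, Finset.mem_filter] at hj ⊢
    exact ⟨hσ.mapsTo hj.1, (hPQ j hj.1).1 hj.2⟩
  · exact (Finset.mem_filter.1 hj).1
  · simp only [Finset.mem_coe, Finset.mem_filter] at hk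
    obtain ⟨j, hj, rfl⟩ := hσ.surjOn hk.1
    exact ⟨j, Finset.mem_filter.2 ⟨hj, (hPQ j hj).2 hk.2⟩, rfl⟩

theorem stmt_6_general
    (N₀ : ℕ)
    (p q : ℕ → ℝ)
    (hdist : Set.InjOn p (Set.Icc 1 N₀) ∧ Set.InjOn q (Set.Icc 1 N₀) ∧
      ∀ i ∈ Set.Icc 1 N₀, ∀ j ∈ Set.Icc 1 N₀, p i ≠ q j)
    (σ : ℕ → ℕ)
    (hσ : Set.BijOn σ (Set.Icc 1 N₀) (Set.Icc 1 N₀))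
    (hnc : ∀ i ∈ Set.Icc 1 N₀, ∀ i' ∈ Set.Icc 1 N₀, i ≠ i' →
      Disjoint (Set.uIcc (p i) (q (σ i))) (Set.uIcc (p i') (q (σ i'))) ∨
      Set.uIcc (p i) (q (σ i)) ⊆ Set.uIcc (p i') (q (σ i')) ∨
      Set.uIcc (p i') (q (σ i')) ⊆ Set.uIcc (p i) (q (σ i)))
    : ∀ i ∈ Set.Icc 1 N₀,
      ((Finset.Icc 1 N₀).filter (fun j =>
        p j ∈ Set.Ioo (min (p i) (q (σ i))) (max (p i) (q (σ i))))).card =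
      ((Finset.Icc 1 N₀).filter (fun j =>
        q j ∈ Set.Ioo (min (p i) (q (σ i))) (max (p i) (q (σ i))))).card := by
  obtain ⟨hp, hq, hpq⟩ := hdist
  intro i hi
  refine Finset.card_filter_eq_of_bijOn (by rwa [Finset.coe_Icc]) fun j hj ↦ ?_
  rw [← Finset.mem_coe, Finset.coe_Icc] at hj
  obtain rfl | hji := eq_or_ne j i
  · exact iff_of_false (notMem_Ioo_min_max_of_uIcc_subset subset_rfl).1
      (notMem_Ioo_min_max_of_uIcc_subset subset_rfl).2
  have hσi := hσ.mapsTo hi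
  have hσj := hσ.mapsTo hj
  exact mem_Ioo_min_max_iff_of_disjoint_or_nested (fun h ↦ hji (hp hj hi h)) (hpq j hj _ hσi)
    (hpq i hi _ hσj).symm (fun h ↦ hji (hσ.injOn hj hi (hq hσj hσi h))) (hnc j hj i hi hji)

theorem stmt_6
    (N₀ : ℕ) (hN₀ : 1 ≤ N₀)
    (p q : ℕ → ℝ)
    (hdist : Set.InjOn p (Set.Icc 1 N₀) ∧ Set.InjOn q (Set.Icc 1 N₀) ∧
      ∀ i ∈ Set.Icc 1 N₀, ∀ j ∈ Set.Icc 1 N₀, p i ≠ q j)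
    (σ : ℕ → ℕ)
    (hσ : Set.BijOn σ (Set.Icc 1 N₀) (Set.Icc 1 N₀))
    (hnc : ∀ i ∈ Set.Icc 1 N₀, ∀ i' ∈ Set.Icc 1 N₀, i ≠ i' →
      Disjoint (Set.uIcc (p i) (q (σ i))) (Set.uIcc (p i') (q (σ i'))) ∨
      Set.uIcc (p i) (q (σ i)) ⊆ Set.uIcc (p i') (q (σ i')) ∨
      Set.uIcc (p i') (q (σ i')) ⊆ Set.uIcc (p i) (q (σ i)))
    : ∀ i ∈ Set.Icc 1 N₀,
      ((Finset.Icc 1 N₀).filter (fun j =>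
        p j ∈ Set.Ioo (min (p i) (q (σ i))) (max (p i) (q (σ i))))).card =
      ((Finset.Icc 1 N₀).filter (fun j =>
        q j ∈ Set.Ioo (min (p i) (q (σ i))) (max (p i) (q (σ i))))).card :=
  stmt_6_general N₀ p q hdist σ hσ hnc
end
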